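/- arXiv:2303.10302 — 9 statements merged into one kernel-verified Lean document; each statement's English description precedes it below -/
import Mathlib

section
/- The value function is monotone increasing in the state: for all horizons H, budgets b, and states s ≤ s', one has V H s b ≤ V H s' b. -/
noncomputable def V (smax d0 : ℕ) (r : ℝ) : ℕ → ℕ → ℕ → ℝ
  | 0, s, _ => if 0 < s then r else 0
  | (H+1), s, b =>
      if s = 0 then 0
      else r + (if 0 < b then max (V smax d0 r H (s - d0) b) (V smax d0 r H smax (b - 1))
                else V smax d0 r H (s - d0) b)

theorem stmt1 (smax d0 : ℕ) (hsmax : 0 < smax) (hd0 : 0 < d0) (hds : d0 ≤ smax)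
    (r : ℝ) (hr : 0 < r) :
    ∀ H b s s', s ≤ s' → V smax d0 r H s b ≤ V smax d0 r H s' b := by
  have hnn : ∀ H s b, 0 ≤ V smax d0 r H s b := by
    intro H
    induction H with
    | zero => intro s b; simp only [V]; split <;> [exact hr.le; exact le_refl 0]
    | succ H ih =>
      intro s b
      simp only [V]
      split
      · exact le_refl 0
      · have : (0:ℝ) ≤ if 0 < b then max (V smax d0 r H (s - d0) b) (V smax d0 r H smax (b-1))
            else V smax d0 r H (s - d0) b := by
          split
          · exact le_trans (ih _ _) (le_max_left _ _)
          · exact ih _ _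
        linarith
  intro H
  induction H with
  | zero =>
    intro b s s' hss
    simp only [V]
    split
    · have : 0 < s' := lt_of_lt_of_le (by assumption) hss
      simp [this]
    · split
      · exact hr.le
      · exact le_refl 0
  | succ H ih =>
    intro b s s' hss
    simp only [V]
    by_cases hs : s = 0
    · simp [hs]
      split
      · exact le_refl 0
      · have : (0:ℝ) ≤ if 0 < b then max (V smax d0 r H (s' - d0) b) (V smax d0 r H smax (b-1))
            else V smax d0 r H (s' - d0) b := by
          split
          · exact le_trans (hnn _ _ _) (le_max_left _ _)
          · exact hnn _ _ _
        linarith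
    · have hs' : s' ≠ 0 := fun h => hs (Nat.le_zero.mp (h ▸ hss))
      simp only [hs, hs', if_false]
      have hsub : s - d0 ≤ s' - d0 := Nat.sub_le_sub_right hss d0
      gcongr ?_ + ?_
      · exact le_refl r
      · split
        · exact max_le_max (ih b _ _ hsub) (le_refl _)
        · exact ih b _ _ hsub
end

section
/- If the initial state satisfies s > d0, then the 'do nothing' action is optimal at the first step: for all H and all budgets b, V (H+1) s b = r + V H (s - d0) b. Equivalently, when b > 0 and s > d0, V H (s - d0) b ≥ V H s_max (b - 1). -/
/-! Maintaining from state `s > 0` at budget `b > 0` yields `r + V H smax (b - 1)`, while starting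
from `smax` with one unit less can gain at most `r` over `V H smax (b - 1)`, by monotonicity of `V`
in the state and in the budget. Hence `V H smax (b - 1) ≤ V H s b` whenever `s, b > 0`; applied to
`s - d0 > 0`, this says that doing nothing is always at least as good as maintaining. -/

namespace V

variable {smax d0 : ℕ} {r : ℝ}

theorem zero_state (H b : ℕ) : V smax d0 r H 0 b = 0 := by
  cases H <;> simp [V]

theorem succ_of_pos {H s : ℕ} (hs : 0 < s) (b : ℕ) :
    V smax d0 r (H + 1) s b =
      r + if 0 < b then max (V smax d0 r H (s - d0) b) (V smax d0 r H smax (b - 1))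
          else V smax d0 r H (s - d0) b := by
  simp [V, hs.ne']

theorem nonneg (hr : 0 ≤ r) (H s b : ℕ) : 0 ≤ V smax d0 r H s b := by
  induction H generalizing s b with
  | zero => simp only [V]; split <;> simp [hr]
  | succ H ih =>
    rcases Nat.eq_zero_or_pos s with rfl | hs
    · rw [zero_state]
    · rw [succ_of_pos hs]
      split
      · exact add_nonneg hr (le_max_of_le_left (ih _ _))
      · exact add_nonneg hr (ih _ _)

theorem monotone_state (hr : 0 ≤ r) (H b : ℕ) : Monotone fun s ↦ V smax d0 r H s b := by
  induction H generalizing b with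
  | zero =>
    intro s s' hss
    simp only [V]
    split_ifs <;> first | rfl | exact hr | omega
  | succ H ih =>
    intro s s' hss
    rcases Nat.eq_zero_or_pos s with rfl | hs
    · simpa only [zero_state] using nonneg hr _ _ _
    · have hsub : s - d0 ≤ s' - d0 := Nat.sub_le_sub_right hss d0
      dsimp only
      rw [succ_of_pos hs, succ_of_pos (hs.trans_le hss)]
      split
      · exact add_le_add_right (max_le_max (ih _ hsub) le_rfl) r
      · exact add_le_add_right (ih _ hsub) r

theorem monotone_budget (H s : ℕ) : Monotone (V smax d0 r H s) := by
  induction H generalizing s with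
  | zero => intro b b' _; rfl
  | succ H ih =>
    intro b b' hbb
    rcases Nat.eq_zero_or_pos s with rfl | hs
    · simp only [zero_state, le_refl]
    rw [succ_of_pos hs, succ_of_pos hs]
    by_cases hb : 0 < b
    · rw [if_pos hb, if_pos (hb.trans_le hbb)]
      exact add_le_add_right (max_le_max (ih _ hbb) (ih _ (Nat.sub_le_sub_right hbb 1))) r
    · rw [if_neg hb]
      split
      · exact add_le_add_right (le_max_of_le_left (ih _ hbb)) r
      · exact add_le_add_right (ih _ hbb) r

theorem succ_smax_le (hr : 0 ≤ r) (H b : ℕ) :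
    V smax d0 r (H + 1) smax b ≤ r + V smax d0 r H smax b := by
  rcases Nat.eq_zero_or_pos smax with hsmax | hsmax
  · simp only [hsmax, zero_state, add_zero, hr]
  have hdo : V smax d0 r H (smax - d0) b ≤ V smax d0 r H smax b :=
    monotone_state hr H b (Nat.sub_le smax d0)
  rw [succ_of_pos hsmax]
  split
  · exact add_le_add_right (max_le hdo (monotone_budget H smax (Nat.sub_le b 1))) r
  · exact add_le_add_right hdo r

theorem maintain_le_succ {H s b : ℕ} (hs : 0 < s) (hb : 0 < b) :
    r + V smax d0 r H smax (b - 1) ≤ V smax d0 r (H + 1) s b := by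
  rw [succ_of_pos hs, if_pos hb]
  exact add_le_add_right (le_max_right _ _) r

theorem smax_pred_le (hr : 0 ≤ r) {H s b : ℕ} (hs : 0 < s) (hb : 0 < b) :
    V smax d0 r H smax (b - 1) ≤ V smax d0 r H s b := by
  cases H with
  | zero => simp only [V, if_pos hs]; split <;> simp [hr]
  | succ H => exact (succ_smax_le hr H _).trans (maintain_le_succ hs hb)

end V

theorem stmt3_general (smax d0 : ℕ)
    (r : ℝ) (hr : 0 < r) :
    (∀ H s b, d0 < s → V smax d0 r (H + 1) s b = r + V smax d0 r H (s - d0) b) ∧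
    (∀ H s b, d0 < s → 0 < b → V smax d0 r H smax (b - 1) ≤ V smax d0 r H (s - d0) b) := by
  have key : ∀ H s b, d0 < s → 0 < b →
      V smax d0 r H smax (b - 1) ≤ V smax d0 r H (s - d0) b := fun H s b hs hb ↦
    V.smax_pred_le hr.le (Nat.sub_pos_of_lt hs) hb
  refine ⟨fun H s b hs ↦ ?_, key⟩
  rw [V.succ_of_pos (d0.zero_le.trans_lt hs)]
  split
  · rw [max_eq_left (key H s b hs ‹_›)]
  · rfl

theorem stmt3 (smax d0 : ℕ) (hsmax : 0 < smax) (hd0 : 0 < d0) (hds : d0 ≤ smax)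
    (r : ℝ) (hr : 0 < r) :
    (∀ H s b, d0 < s → V smax d0 r (H + 1) s b = r + V smax d0 r H (s - d0) b) ∧
    (∀ H s b, d0 < s → 0 < b → V smax d0 r H smax (b - 1) ≤ V smax d0 r H (s - d0) b) :=
  stmt3_general smax d0 r hr
end

section
/- With zero budget, the value function equals the time until absorption capped by the horizon: for all H and all s, V H s 0 = r * min (H + 1) (ceil(s / d0)), where ceil(s/d0) denotes the least natural number k with s ≤ k * d0 (interpreted as 0 when s = 0). -/
theorem stmt5 (smax d0 : ℕ) (hsmax : 0 < smax) (hd0 : 0 < d0) (hds : d0 ≤ smax)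
    (r : ℝ) (hr : 0 < r) :
    ∀ H s k, IsLeast {k : ℕ | s ≤ k * d0} k →
      V smax d0 r H s 0 = r * (min (H + 1) k : ℕ) := by
  intro H
  induction H with
  | zero =>
    intro s k hk
    rcases Nat.eq_zero_or_pos s with hs | hs
    · subst hs
      have hk0 : k = 0 := le_antisymm (hk.2 (by simp)) (Nat.zero_le _)
      simp [V, hk0]
    · have hk1 : 1 ≤ k := by
        by_contra h
        have hk0 : k = 0 := by omega
        have h0 := hk.1
        simp only [Set.mem_setOf_eq, hk0, zero_mul, Nat.le_zero] at h0
        omega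
      simp [V, hs, min_eq_left (by omega : 1 ≤ k)]
  | succ H ih =>
    intro s k hk
    rcases Nat.eq_zero_or_pos s with hs | hs
    · subst hs
      have hk0 : k = 0 := le_antisymm (hk.2 (by simp)) (Nat.zero_le _)
      simp [V, hk0]
    · have hk1 : 1 ≤ k := by
        by_contra h
        have hk0 : k = 0 := by omega
        have h0 := hk.1
        simp only [Set.mem_setOf_eq, hk0, zero_mul, Nat.le_zero] at h0
        omega
      have hk' : IsLeast {j : ℕ | s - d0 ≤ j * d0} (k - 1) := by
        constructor
        · have := hk.1
          simp only [Set.mem_setOf_eq] at this ⊢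
          have : (k - 1) * d0 + d0 = k * d0 := by
            cases k with
            | zero => omega
            | succ n => simp [Nat.succ_mul]
          omega
        · intro j hj
          simp only [Set.mem_setOf_eq] at hj
          have : s ≤ (j + 1) * d0 := by
            simp [Nat.succ_mul]; omega
          have := hk.2 this
          omega
      have hV := ih (s - d0) (k - 1) hk'
      have hne : s ≠ 0 := by omega
      simp only [V, hne, if_false, Nat.lt_irrefl, if_neg (lt_irrefl 0), hV]
      have hmin : min (H + 1 + 1) k = min (H + 1) (k - 1) + 1 := by omega
      rw [hmin]
      push_cast
      ring
end

section
/- The value function is uniformly bounded by r times (horizon + 1): for all H, s, b, one has V H s b ≤ r * (H + 1), with equality whenever s > d0 and b ≥ ⌊H/2⌋, and whenever 0 < s ≤ d0 and b ≥ ⌈H/2⌉ (assuming s_max > d0). -/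
theorem stmt6 (smax d0 : ℕ) (hsmax : 0 < smax) (hd0 : 0 < d0) (hds : d0 < smax)
    (r : ℝ) (hr : 0 < r) :
    (∀ H s b, V smax d0 r H s b ≤ r * (H + 1)) ∧
    (∀ H s b, d0 < s → H / 2 ≤ b → V smax d0 r H s b = r * (H + 1)) ∧
    (∀ H s b, 0 < s → s ≤ d0 → (H + 1) / 2 ≤ b → V smax d0 r H s b = r * (H + 1)) := by
  have bound : ∀ H s b, V smax d0 r H s b ≤ r * (H + 1) := by
    intro H
    induction H with
    | zero =>
      intro s b
      rw [V]
      split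
      · nlinarith
      · positivity
    | succ H ih =>
      intro s b
      rw [V]
      split
      · positivity
      · have h1 := ih (s - d0) b
        have h2 := ih smax (b - 1)
        push_cast
        split
        · have := max_le h1 h2
          push_cast at this
          linarith
        · push_cast at h1
          linarith
  have key : ∀ H, (∀ s b, d0 < s → H / 2 ≤ b → V smax d0 r H s b = r * (H + 1)) ∧
      (∀ s b, 0 < s → s ≤ d0 → (H + 1) / 2 ≤ b → V smax d0 r H s b = r * (H + 1)) := by
    intro H
    induction H with
    | zero =>
      constructor <;> intro s b <;> intros <;> rw [V, if_pos (by omega)] <;> norm_num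
    | succ H ih =>
      obtain ⟨ih1, ih2⟩ := ih
      constructor
      · intro s b hs hb
        rw [V, if_neg (by omega)]
        have hsub : V smax d0 r H (s - d0) b = r * (H + 1) := by
          rcases le_or_gt (s - d0) d0 with h | h
          · exact ih2 _ _ (by omega) h (by omega)
          · exact ih1 _ _ h (by omega)
        have hmax : max (V smax d0 r H (s - d0) b) (V smax d0 r H smax (b - 1))
            = r * (H + 1) := by
          refine le_antisymm (max_le (bound _ _ _) (bound _ _ _)) ?_
          rw [← hsub]; exact le_max_left _ _
        split
        · rw [hmax]; push_cast; ring
        · rw [hsub]; push_cast; ring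
      · intro s b hs0 hsd hb
        rw [V, if_neg (by omega), if_pos (by omega)]
        have hsm : V smax d0 r H smax (b - 1) = r * (H + 1) := ih1 _ _ hds (by omega)
        have hmax : max (V smax d0 r H (s - d0) b) (V smax d0 r H smax (b - 1))
            = r * (H + 1) := by
          refine le_antisymm (max_le (bound _ _ _) (bound _ _ _)) ?_
          rw [← hsm]; exact le_max_right _ _
        rw [hmax]; push_cast; ring
  exact ⟨bound, fun H => (key H).1, fun H => (key H).2⟩
end

section
/- Saturation of the value function in the budget: if the initial state satisfies s > d0, then V H s b is constant in b for all b ≥ ⌊H/2⌋, i.e., V H s b = V H s ⌊H/2⌋ for all b ≥ ⌊H/2⌋. -/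
lemma V_le (smax d0 : ℕ) (r : ℝ) (hr : 0 < r) :
    ∀ H s b, V smax d0 r H s b ≤ (H + 1) * r := by
  intro H
  induction H with
  | zero =>
    intro s b
    rw [V]
    split <;> simp <;> linarith
  | succ H ih =>
    intro s b
    rw [V]
    split
    · positivity
    · have h1 := ih (s - d0) b
      have h2 := ih smax (b - 1)
      push_cast
      split
      · have := max_le h1 h2
        push_cast at this
        linarith
      · push_cast at h1
        linarith

lemma V_sat (smax d0 : ℕ) (hd0 : 0 < d0) (hds : d0 < smax) (r : ℝ) (hr : 0 < r) :
    ∀ H, (∀ s b, d0 < s → H / 2 ≤ b → V smax d0 r H s b = (H + 1) * r) ∧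
         (∀ s b, 0 < s → (H + 1) / 2 ≤ b → V smax d0 r H s b = (H + 1) * r) := by
  intro H
  induction H with
  | zero =>
    constructor <;> intro s b hs _ <;> rw [V, if_pos (by omega)] <;> ring
  | succ H ih =>
    obtain ⟨ih1, ih2⟩ := ih
    constructor
    · intro s b hs hb
      rw [V, if_neg (by omega)]
      have h1 : V smax d0 r H (s - d0) b = (H + 1) * r := ih2 (s - d0) b (by omega) (by omega)
      by_cases hb0 : 0 < b
      · rw [if_pos hb0]
        have h2 : V smax d0 r H smax (b - 1) ≤ (H + 1) * r := V_le smax d0 r hr H smax (b - 1)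
        rw [max_eq_left (by rw [h1]; exact h2), h1]
        push_cast; ring
      · rw [if_neg hb0, h1]
        push_cast; ring
    · intro s b hs hb
      rw [V, if_neg (by omega)]
      have hb0 : 0 < b := by omega
      rw [if_pos hb0]
      have h2 : V smax d0 r H smax (b - 1) = (H + 1) * r := ih1 smax (b - 1) hds (by omega)
      have h1 : V smax d0 r H (s - d0) b ≤ (H + 1) * r := V_le smax d0 r hr H (s - d0) b
      rw [max_eq_right (by rw [h2]; exact h1), h2]
      push_cast; ring

theorem stmt7 (smax d0 : ℕ) (hsmax : 0 < smax) (hd0 : 0 < d0) (hds : d0 < smax)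
    (r : ℝ) (hr : 0 < r) :
    ∀ H s b, d0 < s → H / 2 ≤ b → V smax d0 r H s b = V smax d0 r H s (H / 2) := by
  intro H s b hs hb
  rw [(V_sat smax d0 hd0 hds r hr H).1 s b hs hb,
      (V_sat smax d0 hd0 hds r hr H).1 s (H / 2) hs le_rfl]
end

section
/- Saturation of the value function in the budget for low initial states: if 0 < s ≤ d0, then V H s b is constant in b for all b ≥ ⌈H/2⌉, i.e., V H s b = V H s ⌈H/2⌉ for all b ≥ ⌈H/2⌉, where ⌈H/2⌉ = (H+1)/2 in natural number division. -/
lemma Vzero (smax d0 : ℕ) (r : ℝ) : ∀ H b, V smax d0 r H 0 b = 0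
  | 0, b => by simp [V]
  | (H+1), b => by simp [V]

lemma Vub (smax d0 : ℕ) (r : ℝ) (hr : 0 < r) :
    ∀ H s b, V smax d0 r H s b ≤ r * (H + 1) := by
  intro H
  induction H with
  | zero =>
      intro s b
      simp only [V]
      split
      · push_cast; linarith
      · positivity
  | succ H ih =>
      intro s b
      simp only [V]
      split
      · positivity
      · have h1 := ih (s - d0) b
        have h2 := ih smax (b - 1)
        have : (↑(H+1) : ℝ) + 1 = (↑H + 1) + 1 := by push_cast; ring
        rw [this]
        split
        · have := max_le h1 h2
          nlinarith
        · nlinarith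

lemma VD (smax d0 : ℕ) (hd0 : 0 < d0) (hds : d0 < smax) (r : ℝ) (hr : 0 < r) :
    ∀ H, (∀ s b, 0 < s → (H + 1) / 2 ≤ b → V smax d0 r H s b = r * (H + 1)) ∧
         (∀ b, H / 2 ≤ b → V smax d0 r H smax b = r * (H + 1)) := by
  intro H
  induction H with
  | zero =>
      constructor
      · intro s b hs _; simp [V, hs]
      · intro b _; simp [V]; omega
  | succ H ih =>
      obtain ⟨ihD, ihB⟩ := ih
      have hcast : r * (↑(H+1) + 1) = r + r * (H + 1) := by push_cast; ring
      constructor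
      · intro s b hs hb
        have hbpos : 0 < b := by omega
        simp only [V, Nat.pos_iff_ne_zero.mp hs, if_false, hs.ne', if_pos hbpos]
        by_cases hsd : d0 < s
        · -- stay branch
          have h1 : V smax d0 r H (s - d0) b = r * (H + 1) :=
            ihD (s - d0) b (by omega) (by omega)
          have h2 : V smax d0 r H smax (b - 1) ≤ r * (H + 1) := by
            have := Vub smax d0 r hr H smax (b - 1); push_cast at this ⊢; linarith
          rw [hcast, max_eq_left (by rw [h1]; exact h2), h1]
        · -- jump branch: s - d0 = 0
          have hs0 : s - d0 = 0 := by omega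
          rw [hs0, Vzero]
          have h2 : V smax d0 r H smax (b - 1) = r * (H + 1) := ihB (b - 1) (by omega)
          have hpos : 0 ≤ V smax d0 r H smax (b - 1) := by
            rw [h2]; positivity
          rw [max_eq_right hpos, h2, hcast]
      · intro b hb
        have hsm : smax ≠ 0 := by omega
        simp only [V, hsm, if_false]
        have h1 : V smax d0 r H (smax - d0) b = r * (H + 1) :=
          ihD (smax - d0) b (by omega) (by omega)
        split
        · have h2 : V smax d0 r H smax (b - 1) ≤ r * (H + 1) := by
            have := Vub smax d0 r hr H smax (b - 1); push_cast at this ⊢; linarith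
          rw [hcast, max_eq_left (by rw [h1]; exact h2), h1]
        · rw [hcast, h1]

theorem stmt8 (smax d0 : ℕ) (hsmax : 0 < smax) (hd0 : 0 < d0) (hds : d0 < smax)
    (r : ℝ) (hr : 0 < r) :
    ∀ H s b, 0 < s → s ≤ d0 → (H + 1) / 2 ≤ b →
      V smax d0 r H s b = V smax d0 r H s ((H + 1) / 2) := by
  intro H s b hs _ hb
  have D := (VD smax d0 hd0 hds r hr H).1
  rw [D s b hs hb, D s ((H+1)/2) hs le_rfl]
end

section
/- Discrete concavity of the value function in the budget: for every horizon H, state s, and budget b, the marginal value of an extra unit of budget is decreasing, i.e., V H s (b+2) - V H s (b+1) ≤ V H s (b+1) - V H s b. -/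
/-- steps to die from s by pure decay -/
def tf (d0 s : ℕ) : ℕ := (s + d0 - 1) / d0

lemma tf_zero (d0 : ℕ) (hd0 : 0 < d0) : tf d0 0 = 0 := by
  unfold tf
  exact Nat.div_eq_of_lt (by omega)

lemma tf_pos (d0 s : ℕ) (hd0 : 0 < d0) (hs : 0 < s) : 1 ≤ tf d0 s := by
  unfold tf
  exact Nat.one_le_div_iff hd0 |>.mpr (by omega)

lemma tf_rec (d0 s : ℕ) (hd0 : 0 < d0) (hs : 0 < s) :
    tf d0 s = tf d0 (s - d0) + 1 := by
  unfold tf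
  rcases le_or_gt s d0 with h | h
  · have h1 : s - d0 = 0 := by omega
    rw [h1]
    have : (0 + d0 - 1) / d0 = 0 := Nat.div_eq_of_lt (by omega)
    rw [this]
    have : s + d0 - 1 = (s - 1) + d0 := by omega
    rw [this, Nat.add_div_right _ hd0]
    have : (s - 1) / d0 = 0 := Nat.div_eq_of_lt (by omega)
    omega
  · have h1 : s - d0 + d0 - 1 = s - 1 := by omega
    have h2 : s + d0 - 1 = (s - 1) + d0 := by omega
    rw [h1, h2, Nat.add_div_right _ hd0]

/-- lifetime with budget b -/
def Lf (smax d0 s b : ℕ) : ℕ := if s = 0 then 0 else tf d0 s + b * tf d0 smax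

lemma V_eq (smax d0 : ℕ) (hsmax : 0 < smax) (hd0 : 0 < d0) (r : ℝ) (hr : 0 < r) :
    ∀ H s b, V smax d0 r H s b = r * (min (H + 1) (Lf smax d0 s b) : ℕ) := by
  intro H
  induction H with
  | zero =>
    intro s b
    rcases Nat.eq_zero_or_pos s with hs | hs
    · simp [V, hs, Lf]
    · have h1 : 1 ≤ Lf smax d0 s b := by
        unfold Lf
        rw [if_neg (by omega)]
        have := tf_pos d0 s hd0 hs
        omega
      have : min (0 + 1) (Lf smax d0 s b) = 1 := by omega
      simp [V, hs, this]
  | succ H ih =>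
    intro s b
    rcases Nat.eq_zero_or_pos s with hs | hs
    · simp [V, hs, Lf]
    · have hLs : Lf smax d0 s b = tf d0 (s - d0) + 1 + b * tf d0 smax := by
        unfold Lf
        rw [if_neg (by omega), tf_rec d0 s hd0 hs]
      rcases Nat.eq_zero_or_pos b with hb | hb
      · have hVd : V smax d0 r (H+1) s b = r + V smax d0 r H (s - d0) b := by
          rw [V]
          rw [if_neg (by omega), if_neg (by omega)]
        rw [hVd, ih]
        have hL' : Lf smax d0 (s - d0) b = tf d0 (s - d0) := by
          unfold Lf
          rcases Nat.eq_zero_or_pos (s - d0) with h | h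
          · rw [if_pos h, h, tf_zero d0 hd0]
          · rw [if_neg (by omega), hb]; ring
        have key : (H + 1 + 1) ⊓ Lf smax d0 s b
            = 1 + (H + 1) ⊓ Lf smax d0 (s - d0) b := by
          rw [hL', hLs, hb]
          omega
        rw [key]
        push_cast
        ring
      · have hVd : V smax d0 r (H+1) s b
            = r + max (V smax d0 r H (s - d0) b) (V smax d0 r H smax (b - 1)) := by
          rw [V]
          rw [if_neg (by omega), if_pos hb]
        rw [hVd, ih, ih]
        have hLm : Lf smax d0 smax (b - 1) = b * tf d0 smax := by
          unfold Lf
          rw [if_neg (by omega)]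
          obtain ⟨c, rfl⟩ := Nat.exists_eq_succ_of_ne_zero (by omega : b ≠ 0)
          simp
          ring
        have hmax : max (Lf smax d0 (s - d0) b) (Lf smax d0 smax (b - 1))
            = tf d0 (s - d0) + b * tf d0 smax := by
          rw [hLm]
          unfold Lf
          rcases Nat.eq_zero_or_pos (s - d0) with h | h
          · rw [if_pos h, h, tf_zero d0 hd0]
            omega
          · rw [if_neg (by omega)]
            omega
        rw [← mul_max_of_nonneg _ _ hr.le, ← Nat.cast_max, ← min_max_distrib_left, hmax]
        have key : (H + 1 + 1) ⊓ Lf smax d0 s b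
            = 1 + (H + 1) ⊓ (tf d0 (s - d0) + b * tf d0 smax) := by
          rw [hLs]; omega
        rw [key]
        push_cast
        ring

theorem stmt9 (smax d0 : ℕ) (hsmax : 0 < smax) (hd0 : 0 < d0) (hds : d0 < smax)
    (r : ℝ) (hr : 0 < r) :
    ∀ H s b, V smax d0 r H s (b + 2) - V smax d0 r H s (b + 1) ≤
      V smax d0 r H s (b + 1) - V smax d0 r H s b := by
  intro H s b
  rw [V_eq smax d0 hsmax hd0 r hr, V_eq smax d0 hsmax hd0 r hr,
    V_eq smax d0 hsmax hd0 r hr]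
  set m0 := min (H + 1) (Lf smax d0 s b) with hm0
  set m1 := min (H + 1) (Lf smax d0 s (b + 1)) with hm1
  set m2 := min (H + 1) (Lf smax d0 s (b + 2)) with hm2
  have key : m2 + m0 ≤ 2 * m1 := by
    rw [hm0, hm1, hm2]
    unfold Lf
    rcases Nat.eq_zero_or_pos s with hs | hs
    · simp [hs]
    · rw [if_neg (by omega), if_neg (by omega), if_neg (by omega)]
      have h1 : (b + 1) * tf d0 smax = b * tf d0 smax + tf d0 smax := by ring
      have h2 : (b + 2) * tf d0 smax = b * tf d0 smax + 2 * tf d0 smax := by ring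
      omega
  have keyR : (m2 : ℝ) + m0 ≤ 2 * m1 := by exact_mod_cast key
  nlinarith [hr.le]
end

section
/- Midpoint concavity over integer budgets: for any horizon H, state s, and budgets b ≤ b'' with b'' - b even, letting b' = (b + b'')/2, one has V H s b' ≥ (V H s b + V H s b'')/2. -/
lemma V_closed (smax d0 : ℕ) (hsmax : 0 < smax) (hd0 : 0 < d0) (r : ℝ) (hr : 0 ≤ r) :
    ∀ H s b, V smax d0 r H s b =
      if s = 0 then 0
      else r * ((min (H+1) ((s + d0 - 1)/d0 + b * ((smax + d0 - 1)/d0)) : ℕ) : ℝ) := by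
  have hc1 : ∀ s : ℕ, s ≠ 0 → 1 ≤ (s + d0 - 1)/d0 := by
    intro s hs
    rw [Nat.one_le_div_iff hd0]; omega
  have hc2 : ∀ s : ℕ, d0 < s → 2 ≤ (s + d0 - 1)/d0 := by
    intro s hs
    rw [Nat.le_div_iff_mul_le hd0]; omega
  have hclow : ∀ s : ℕ, s ≠ 0 → s ≤ d0 → (s + d0 - 1)/d0 = 1 := by
    intro s hs hsd
    apply Nat.div_eq_of_lt_le <;> omega
  have hcsub : ∀ s : ℕ, d0 < s → (s - d0 + d0 - 1)/d0 + 1 = (s + d0 - 1)/d0 := by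
    intro s hs
    have h1 : s + d0 - 1 = (s - d0 + d0 - 1) + d0 := by omega
    rw [h1, Nat.add_div_right _ hd0]
  intro H
  induction H with
  | zero =>
    intro s b
    by_cases hs : s = 0
    · simp [V, hs]
    · have h1 : 0 < s := Nat.pos_of_ne_zero hs
      have : min (0+1) ((s + d0 - 1)/d0 + b * ((smax + d0 - 1)/d0)) = 1 := by
        have := hc1 s hs; omega
      simp [V, hs, h1, this]
  | succ H ih =>
    intro s b
    by_cases hs : s = 0
    · simp [V, hs]
    · simp only [V, hs, if_false]
      by_cases hb : 0 < b
      · simp only [hb, if_true]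
        rw [ih (s - d0) b, ih smax (b-1)]
        have hsm : smax ≠ 0 := hsmax.ne'
        rw [if_neg hsm]
        set T := (smax + d0 - 1)/d0 with hT
        have hBval : T + (b-1) * T = b * T := by
          obtain ⟨m, rfl⟩ : ∃ m, b = m + 1 := ⟨b - 1, by omega⟩
          simp only [Nat.add_sub_cancel]
          ring
        rw [hBval]
        by_cases hsd : s ≤ d0
        · have hs0 : s - d0 = 0 := by omega
          rw [hs0, if_pos rfl]
          have hmax : max (0:ℝ) (r * ((min (H+1) (b * T) : ℕ) : ℝ))
              = r * ((min (H+1) (b * T) : ℕ) : ℝ) := by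
            apply max_eq_right
            positivity
          rw [hmax]
          have hc : (s + d0 - 1)/d0 = 1 := hclow s hs hsd
          rw [hc]
          have hmin : min (H+1+1) (1 + b * T) = min (H+1) (b * T) + 1 := by omega
          rw [hmin]
          push_cast
          ring
        · have hsd' : d0 < s := by omega
          have hs' : s - d0 ≠ 0 := by omega
          rw [if_neg hs']
          have hmax : max (r * ((min (H+1) ((s - d0 + d0 - 1)/d0 + b * T) : ℕ) : ℝ))
              (r * ((min (H+1) (b * T) : ℕ) : ℝ))
              = r * ((min (H+1) ((s - d0 + d0 - 1)/d0 + b * T) : ℕ) : ℝ) := by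
            apply max_eq_left
            apply mul_le_mul_of_nonneg_left _ hr
            have h4 := hc1 (s - d0) hs'
            have hnat : min (H+1) (b*T) ≤ min (H+1) ((s - d0 + d0 - 1)/d0 + b * T) := by
              omega
            exact_mod_cast hnat
          rw [hmax]
          have h3 := hcsub s hsd'
          have hmin : min (H+1+1) ((s + d0 - 1)/d0 + b * T)
              = min (H+1) ((s - d0 + d0 - 1)/d0 + b * T) + 1 := by omega
          rw [hmin]
          push_cast
          ring
      · simp only [hb, if_false]
        have hb0 : b = 0 := by omega
        subst hb0
        rw [ih (s - d0) 0]
        by_cases hsd : s ≤ d0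
        · have hs0 : s - d0 = 0 := by omega
          rw [hs0, if_pos rfl]
          have hc : (s + d0 - 1)/d0 = 1 := hclow s hs hsd
          rw [hc]
          have hmin : min (H+1+1) (1 + 0 * ((smax + d0 - 1)/d0)) = 1 := by omega
          rw [hmin]
          simp
        · have hsd' : d0 < s := by omega
          have hs' : s - d0 ≠ 0 := by omega
          rw [if_neg hs']
          have h3 := hcsub s hsd'
          have hmin : min (H+1+1) ((s + d0 - 1)/d0 + 0 * ((smax + d0 - 1)/d0))
              = min (H+1) ((s - d0 + d0 - 1)/d0 + 0 * ((smax + d0 - 1)/d0)) + 1 := by omega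
          rw [hmin]
          push_cast
          ring

theorem stmt10 (smax d0 : ℕ) (hsmax : 0 < smax) (hd0 : 0 < d0) (hds : d0 < smax)
    (r : ℝ) (hr : 0 < r) :
    ∀ H s b b'', b ≤ b'' → Even (b'' - b) →
      (V smax d0 r H s b + V smax d0 r H s b'') / 2 ≤ V smax d0 r H s ((b + b'') / 2) := by
  intro H s b b'' hbb heven
  rw [V_closed smax d0 hsmax hd0 r hr.le, V_closed smax d0 hsmax hd0 r hr.le,
    V_closed smax d0 hsmax hd0 r hr.le]
  by_cases hs : s = 0
  · simp [hs]
  · simp only [hs, if_false]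
    obtain ⟨k, hk⟩ := heven
    set T := (smax + d0 - 1)/d0
    set c := (s + d0 - 1)/d0
    have hb' : (b + b'') / 2 = b + k := by omega
    rw [hb']
    have key : min (H+1) (c + b * T) + min (H+1) (c + b'' * T)
        ≤ 2 * min (H+1) (c + (b + k) * T) := by
      have hb'' : b'' = b + 2 * k := by omega
      subst hb''
      have : (b + 2*k) * T = b * T + 2 * (k * T) := by ring
      have h2 : (b + k) * T = b * T + k * T := by ring
      omega
    have keyR : ((min (H+1) (c + b * T) : ℕ) : ℝ) + ((min (H+1) (c + b'' * T) : ℕ) : ℝ)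
        ≤ 2 * ((min (H+1) (c + (b + k) * T) : ℕ) : ℝ) := by exact_mod_cast key
    rw [div_le_iff₀ (by norm_num : (0:ℝ) < 2)]
    nlinarith [hr.le]
end

section
/- Each unit of budget extends survival by at most ⌈s_max/d0⌉ steps of reward: for all H, s, b, one has V H s (b+1) - V H s b ≤ r * ⌈s_max/d0⌉, where ⌈s_max/d0⌉ is the least k with s_max ≤ k * d0. -/
lemma V_nonneg (smax d0 : ℕ) (r : ℝ) (hr : 0 ≤ r) :
    ∀ H s b, 0 ≤ V smax d0 r H s b := by
  intro H
  induction H with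
  | zero => intro s b; rw [V]; split <;> simp [hr]
  | succ H ih =>
    intro s b
    rw [V]
    split
    · exact le_refl 0
    · have h1 := ih (s - d0) b
      have h2 := ih smax (b - 1)
      split
      · have := le_max_left (V smax d0 r H (s - d0) b) (V smax d0 r H smax (b - 1))
        linarith
      · linarith

lemma V_budget0 (smax d0 : ℕ) (hd0 : 0 < d0) (r : ℝ) (hr : 0 ≤ r) :
    ∀ H s n, s ≤ n * d0 → V smax d0 r H s 0 ≤ r * n := by
  intro H
  induction H with
  | zero =>
    intro s n hsn
    rw [V]
    split
    · rename_i hs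
      have hn : 1 ≤ n := by
        by_contra h
        push_neg at h
        interval_cases n
        omega
      calc r = r * 1 := by ring
        _ ≤ r * n := by
            apply mul_le_mul_of_nonneg_left _ hr
            exact_mod_cast hn
    · positivity
  | succ H ih =>
    intro s n hsn
    rw [V]
    split
    · positivity
    · rename_i hs
      simp only [lt_irrefl, if_false]
      have hn : 1 ≤ n := by
        by_contra h
        push_neg at h
        interval_cases n
        omega
      have hstep : s - d0 ≤ (n - 1) * d0 := by
        have : (n - 1) * d0 = n * d0 - d0 := by
          cases n with
          | zero => omega
          | succ m => simp [Nat.succ_mul]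
        omega
      have := ih (s - d0) (n - 1) hstep
      have hcast : ((n - 1 : ℕ) : ℝ) = (n : ℝ) - 1 := by
        have : (1:ℕ) ≤ n := hn
        push_cast [Nat.cast_sub this]
        ring
      rw [hcast] at this
      linarith

theorem stmt14 (smax d0 : ℕ) (hsmax : 0 < smax) (hd0 : 0 < d0) (hds : d0 ≤ smax)
    (r : ℝ) (hr : 0 < r) (k : ℕ) (hk : IsLeast {k : ℕ | smax ≤ k * d0} k) :
    ∀ H s b, V smax d0 r H s (b + 1) - V smax d0 r H s b ≤ r * k := by
  have hkd : smax ≤ k * d0 := hk.1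
  have hk1 : 1 ≤ k := by
    by_contra h
    push_neg at h
    interval_cases k
    omega
  have hrk : 0 ≤ r * k := by positivity
  suffices h : ∀ H s b, V smax d0 r H s (b + 1) ≤ V smax d0 r H s b + r * k by
    intro H s b; linarith [h H s b]
  intro H
  induction H with
  | zero =>
    intro s b
    rw [V, V]
    split <;> linarith
  | succ H ih =>
    intro s b
    rw [V, V]
    split
    · linarith
    · rename_i hs
      simp only [Nat.succ_sub_one, Nat.lt_irrefl, Nat.zero_lt_succ, if_true]
      cases b with
      | zero =>
        simp only [lt_irrefl, if_false]
        have h1 : V smax d0 r H (s - d0) 1 ≤ V smax d0 r H (s - d0) 0 + r * k := ih (s - d0) 0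
        have h2 : V smax d0 r H smax 0 ≤ r * k := V_budget0 smax d0 hd0 r hr.le H smax k hkd
        have h3 : 0 ≤ V smax d0 r H (s - d0) 0 := V_nonneg smax d0 r hr.le H (s - d0) 0
        have := max_le h1 (by linarith : V smax d0 r H smax 0 ≤ V smax d0 r H (s - d0) 0 + r * k)
        linarith
      | succ m =>
        simp only [Nat.zero_lt_succ, if_true, Nat.succ_sub_one]
        have h1 : V smax d0 r H (s - d0) (m + 1 + 1) ≤ V smax d0 r H (s - d0) (m + 1) + r * k :=
          ih (s - d0) (m + 1)
        have h2 : V smax d0 r H smax (m + 1) ≤ V smax d0 r H smax m + r * k := ih smax m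
        have hA := le_max_left (V smax d0 r H (s - d0) (m + 1)) (V smax d0 r H smax m)
        have hB := le_max_right (V smax d0 r H (s - d0) (m + 1)) (V smax d0 r H smax m)
        have := max_le (by linarith : V smax d0 r H (s - d0) (m + 1 + 1) ≤ max (V smax d0 r H (s - d0) (m + 1)) (V smax d0 r H smax m) + r * k)
          (by linarith : V smax d0 r H smax (m + 1) ≤ max (V smax d0 r H (s - d0) (m + 1)) (V smax d0 r H smax m) + r * k)
        linarith
end
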